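/- arXiv:1911.04309 — 13 statements merged into one kernel-verified Lean document; each statement's English description precedes it below -/
import Mathlib

section
/- Let x = Σ_{d ∈ D_PRED} (qf(d) − 1) + Σ_{d ∈ D} p^{|d|}·(1 − qf(d)) and y = Σ_{s ∈ S} p·qa(s) − Σ_{s : h(s)=1} qa(s) − C_INIT − C_EXEC. If x > 0 and C < y/x, then cost_random(p) − cost(h) > 0; likewise, if x < 0 and C > y/x, then cost_random(p) − cost(h) > 0. (Theorem 1: the defect prediction model h has an expected positive profit in comparison to randomly selecting artifacts for quality assurance with probability p.) -/
open Finset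

variable {α β : Type*}

/-- The set of defects that are successfully predicted by the defect prediction
model `h`: all artifacts affected by the defect are predicted as defective. -/
def DPRED (D : Finset β) (aff : β → Finset α) (h : α → Bool) : Finset β :=
  D.filter (fun d => ∀ s ∈ aff d, h s = true)

/-- The set of defects missed by the defect prediction model `h`. -/
def DMISS [DecidableEq β] (D : Finset β) (aff : β → Finset α) (h : α → Bool) : Finset β :=
  D \ DPRED D aff h

/-- The cost of using the defect prediction model `h`. -/
def cost [DecidableEq β] (S : Finset α) (D : Finset β) (aff : β → Finset α)
    (h : α → Bool) (qa : α → ℝ) (qf : β → ℝ) (C CINIT CEXEC : ℝ) : ℝ :=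
  CINIT + CEXEC + ∑ s ∈ S.filter (fun s => h s = true), qa s
    + ∑ _d ∈ DMISS D aff h, C + ∑ d ∈ DPRED D aff h, qf d * C

/-- The expected costs of randomly applying quality assurance to each
artifact independently with probability `p`. -/
def costRandom (S : Finset α) (D : Finset β) (aff : β → Finset α)
    (qa : α → ℝ) (qf : β → ℝ) (C p : ℝ) : ℝ :=
  ∑ s ∈ S, p * qa s + ∑ d ∈ D, (1 - p ^ (aff d).card) * C
    + ∑ d ∈ D, p ^ (aff d).card * qf d * C

/-- **Theorem 1.** The defect prediction model `h` has an expected positive profit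
in comparison to randomly selecting artifacts for quality assurance with probability `p`:
if `x > 0` and `C < y / x`, or `x < 0` and `C > y / x`, then
`costRandom p - cost h > 0`. -/
theorem positive_profit_vs_random [DecidableEq β]
    (S : Finset α) (D : Finset β) (aff : β → Finset α)
    (hsub : ∀ d ∈ D, aff d ⊆ S) (hne : ∀ d ∈ D, (aff d).Nonempty)
    (h : α → Bool) (qa : α → ℝ) (hqa : ∀ s ∈ S, 0 ≤ qa s)
    (qf : β → ℝ) (hqf : ∀ d ∈ D, 0 ≤ qf d ∧ qf d < 1)
    (C CINIT CEXEC : ℝ) (hCI : 0 ≤ CINIT) (hCE : 0 ≤ CEXEC)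
    (p : ℝ) (hp0 : 0 ≤ p) (hp1 : p ≤ 1)
    (x y : ℝ)
    (hx : x = ∑ d ∈ DPRED D aff h, (qf d - 1) + ∑ d ∈ D, p ^ (aff d).card * (1 - qf d))
    (hy : y = ∑ s ∈ S, p * qa s - ∑ s ∈ S.filter (fun s => h s = true), qa s
      - CINIT - CEXEC) :
    (0 < x → C < y / x →
      0 < costRandom S D aff qa qf C p - cost S D aff h qa qf C CINIT CEXEC) ∧
    (x < 0 → y / x < C →
      0 < costRandom S D aff qa qf C p - cost S D aff h qa qf C CINIT CEXEC) := by
  have key : costRandom S D aff qa qf C p - cost S D aff h qa qf C CINIT CEXEC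
      = y - x * C := by
    have hsd : ∑ _d ∈ DMISS D aff h, C = ∑ _d ∈ D, C - ∑ _d ∈ DPRED D aff h, C := by
      rw [DMISS]
      exact Finset.sum_sdiff_eq_sub (by rw [DPRED]; exact Finset.filter_subset _ _)
    simp only [costRandom, cost, hx, hy, hsd, sub_mul, one_mul, mul_sub, mul_one,
      Finset.sum_sub_distrib, Finset.sum_add_distrib, Finset.sum_mul, add_mul]
    ring
  rw [key]
  constructor
  · intro hxpos hC
    have : x * C < y := by
      have := (div_lt_div_iff_of_pos_right hxpos).mpr hC
      nlinarith [(lt_div_iff₀ hxpos).mp hC]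
    linarith
  · intro hxneg hC
    have : x * C < y := by nlinarith [(div_lt_iff_of_neg hxneg).mp hC]
    linarith
end

section
/- With x = Σ_{d ∈ D_PRED} (qf(d) − 1) + Σ_{d ∈ D} p^{|d|}·(1 − qf(d)) and y = Σ_{s ∈ S} p·qa(s) − Σ_{s : h(s)=1} qa(s) − C_INIT − C_EXEC, the profit cost_random(p) − cost(h) is positive if and only if C·x < y. (Key equivalence established in the proof of Theorem 1.) -/
open Finset

variable {α β : Type*}

/-- Key equivalence in the proof of Theorem 1: the profit
`costRandom p - cost h` is positive if and only if `C * x < y`. -/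
theorem positive_profit_iff [DecidableEq β]
    (S : Finset α) (D : Finset β) (aff : β → Finset α)
    (hsub : ∀ d ∈ D, aff d ⊆ S) (hne : ∀ d ∈ D, (aff d).Nonempty)
    (h : α → Bool) (qa : α → ℝ) (hqa : ∀ s ∈ S, 0 ≤ qa s)
    (qf : β → ℝ) (hqf : ∀ d ∈ D, 0 ≤ qf d ∧ qf d < 1)
    (C CINIT CEXEC : ℝ) (hCI : 0 ≤ CINIT) (hCE : 0 ≤ CEXEC)
    (p : ℝ) (hp0 : 0 ≤ p) (hp1 : p ≤ 1)
    (x y : ℝ)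
    (hx : x = ∑ d ∈ DPRED D aff h, (qf d - 1) + ∑ d ∈ D, p ^ (aff d).card * (1 - qf d))
    (hy : y = ∑ s ∈ S, p * qa s - ∑ s ∈ S.filter (fun s => h s = true), qa s
      - CINIT - CEXEC) :
    0 < costRandom S D aff qa qf C p - cost S D aff h qa qf C CINIT CEXEC ↔
      C * x < y := by
  have hsplit : ∑ _d ∈ DMISS D aff h, C + ∑ _d ∈ DPRED D aff h, C = ∑ _d ∈ D, C := by
    rw [DMISS, DPRED, Finset.sum_sdiff (Finset.filter_subset _ _)]
  have key : costRandom S D aff qa qf C p - cost S D aff h qa qf C CINIT CEXEC = y - C * x := by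
    rw [hx, hy]
    unfold costRandom cost
    rw [mul_add, Finset.mul_sum, Finset.mul_sum]
    have h1 : ∑ d ∈ D, (1 - p ^ (aff d).card) * C = ∑ _d ∈ D, C - ∑ d ∈ D, p ^ (aff d).card * C := by
      rw [← Finset.sum_sub_distrib]; apply Finset.sum_congr rfl; intros; ring
    have h2 : ∑ d ∈ D, C * (p ^ (aff d).card * (1 - qf d)) = ∑ d ∈ D, p ^ (aff d).card * C - ∑ d ∈ D, p ^ (aff d).card * qf d * C := by
      rw [← Finset.sum_sub_distrib]; apply Finset.sum_congr rfl; intros; ring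
    have h3 : ∑ d ∈ DPRED D aff h, C * (qf d - 1) = ∑ d ∈ DPRED D aff h, qf d * C - ∑ _d ∈ DPRED D aff h, C := by
      rw [← Finset.sum_sub_distrib]; apply Finset.sum_congr rfl; intros; ring
    rw [h1, h2, h3]
    linarith [hsplit]
  rw [key]
  constructor <;> intro <;> linarith
end

section
/- Suppose D_PRED is nonempty. If C > (Σ_{s : h(s)=1} qa(s) + C_INIT + C_EXEC) / (Σ_{d ∈ D_PRED} (1 − qf(d))), then the defect prediction model h has a positive profit in comparison to applying no additional quality assurance to any artifact, i.e., cost_random(0) − cost(h) > 0. (Corollary 1.) -/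
open Finset

variable {α β : Type*}

/-- **Corollary 1.** If `D_PRED` is nonempty and
`C > (Σ_{s : h(s)=1} qa(s) + C_INIT + C_EXEC) / (Σ_{d ∈ D_PRED} (1 − qf(d)))`,
then the model has positive profit compared to no additional quality assurance. -/
theorem positive_profit_vs_no_qa [DecidableEq β]
    (S : Finset α) (D : Finset β) (aff : β → Finset α)
    (hsub : ∀ d ∈ D, aff d ⊆ S) (hne : ∀ d ∈ D, (aff d).Nonempty)
    (h : α → Bool) (qa : α → ℝ) (hqa : ∀ s ∈ S, 0 ≤ qa s)
    (qf : β → ℝ) (hqf : ∀ d ∈ D, 0 ≤ qf d ∧ qf d < 1)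
    (C CINIT CEXEC : ℝ) (hCI : 0 ≤ CINIT) (hCE : 0 ≤ CEXEC)
    (hpred : (DPRED D aff h).Nonempty)
    (hC : (∑ s ∈ S.filter (fun s => h s = true), qa s + CINIT + CEXEC)
        / (∑ d ∈ DPRED D aff h, (1 - qf d)) < C) :
    0 < costRandom S D aff qa qf C 0 - cost S D aff h qa qf C CINIT CEXEC := by
  have hT : DPRED D aff h ⊆ D := Finset.filter_subset _ _
  have hden : 0 < ∑ d ∈ DPRED D aff h, (1 - qf d) :=
    Finset.sum_pos (fun d hd => by linarith [(hqf d (hT hd)).2]) hpred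
  rw [div_lt_iff₀ hden] at hC
  have h0 : ∀ d ∈ D, (0:ℝ) ^ (aff d).card = 0 := fun d hd =>
    zero_pow (by simpa using (hne d hd).card_pos.ne')
  have h1 : ∑ d ∈ D, (1 - (0:ℝ) ^ (aff d).card) * C = ∑ _d ∈ D, C :=
    Finset.sum_congr rfl (fun d hd => by rw [h0 d hd]; ring)
  have h2 : ∑ d ∈ D, (0:ℝ) ^ (aff d).card * qf d * C = 0 :=
    Finset.sum_eq_zero (fun d hd => by rw [h0 d hd]; ring)
  have hR : costRandom S D aff qa qf C 0 = ∑ _d ∈ D, C := by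
    unfold costRandom
    rw [h1, h2]
    simp
  have hsplit : ∑ _d ∈ D, C = ∑ _d ∈ DMISS D aff h, C + ∑ _d ∈ DPRED D aff h, C :=
    (Finset.sum_sdiff hT).symm
  have hsum : ∑ d ∈ DPRED D aff h, (1 - qf d) * C
      = ∑ _d ∈ DPRED D aff h, C - ∑ d ∈ DPRED D aff h, qf d * C := by
    rw [← Finset.sum_sub_distrib]; exact Finset.sum_congr rfl (fun d _ => by ring)
  have : (∑ d ∈ DPRED D aff h, (1 - qf d)) * C = ∑ d ∈ DPRED D aff h, (1 - qf d) * C :=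
    by rw [Finset.sum_mul]
  unfold cost
  rw [hR, hsplit]
  linarith
end

section
/- Suppose D_PRED is nonempty. Then cost_random(0) − cost(h) > 0 if and only if C > (Σ_{s : h(s)=1} qa(s) + C_INIT + C_EXEC) / (Σ_{d ∈ D_PRED} (1 − qf(d))). (Equivalence version of Corollary 1, following from the chain of equivalences in the proofs.) -/
open Finset

variable {α β : Type*}

/-- Equivalence version of Corollary 1. -/
theorem positive_profit_vs_no_qa_iff [DecidableEq β]
    (S : Finset α) (D : Finset β) (aff : β → Finset α)
    (hsub : ∀ d ∈ D, aff d ⊆ S) (hne : ∀ d ∈ D, (aff d).Nonempty)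
    (h : α → Bool) (qa : α → ℝ) (hqa : ∀ s ∈ S, 0 ≤ qa s)
    (qf : β → ℝ) (hqf : ∀ d ∈ D, 0 ≤ qf d ∧ qf d < 1)
    (C CINIT CEXEC : ℝ) (hCI : 0 ≤ CINIT) (hCE : 0 ≤ CEXEC)
    (hpred : (DPRED D aff h).Nonempty) :
    0 < costRandom S D aff qa qf C 0 - cost S D aff h qa qf C CINIT CEXEC ↔
      (∑ s ∈ S.filter (fun s => h s = true), qa s + CINIT + CEXEC)
        / (∑ d ∈ DPRED D aff h, (1 - qf d)) < C := by
  classical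
  set P := DPRED D aff h with hP
  have hPsub : P ⊆ D := Finset.filter_subset _ _
  have hcr : costRandom S D aff qa qf C 0 = ∑ _d ∈ D, C := by
    unfold costRandom
    have h1 : ∑ s ∈ S, (0:ℝ) * qa s = 0 := by simp
    have h2 : ∑ d ∈ D, (1 - (0:ℝ) ^ (aff d).card) * C = ∑ _d ∈ D, C :=
      Finset.sum_congr rfl fun d hd => by
        rw [zero_pow (Finset.card_ne_zero.mpr (hne d hd))]; ring
    have h3 : ∑ d ∈ D, (0:ℝ) ^ (aff d).card * qf d * C = 0 :=
      Finset.sum_eq_zero fun d hd => by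
        rw [zero_pow (Finset.card_ne_zero.mpr (hne d hd))]; ring
    rw [h1, h2, h3]; ring
  have hsplit : ∑ _d ∈ DMISS D aff h, C + ∑ _d ∈ P, C = ∑ _d ∈ D, C :=
    Finset.sum_sdiff hPsub
  set K := ∑ s ∈ S.filter (fun s => h s = true), qa s + CINIT + CEXEC with hK
  set T := ∑ d ∈ P, (1 - qf d) with hT
  have hTpos : 0 < T := Finset.sum_pos
    (fun d hd => by linarith [(hqf d (hPsub hd)).2]) hpred
  have hdiff : costRandom S D aff qa qf C 0
      - cost S D aff h qa qf C CINIT CEXEC = T * C - K := by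
    unfold cost
    rw [hcr, hK, hT, Finset.sum_mul]
    have : ∑ d ∈ P, (1 - qf d) * C = ∑ _d ∈ P, C - ∑ d ∈ P, qf d * C := by
      rw [← Finset.sum_sub_distrib]; apply Finset.sum_congr rfl; intros; ring
    rw [this]
    linarith [hsplit]
  rw [hdiff, div_lt_iff₀ hTpos]
  constructor <;> intro hh <;> nlinarith
end

section
/- Suppose D_MISS is nonempty. If C < (Σ_{s : h(s)=0} qa(s) − C_INIT − C_EXEC) / (Σ_{d ∈ D_MISS} (1 − qf(d))), then the defect prediction model h has a positive profit in comparison to applying quality assurance to all artifacts, i.e., cost_random(1) − cost(h) > 0. (Corollary 2.) -/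
open Finset

variable {α β : Type*}

/-- **Corollary 2.** If `D_MISS` is nonempty and
`C < (Σ_{s : h(s)=0} qa(s) − C_INIT − C_EXEC) / (Σ_{d ∈ D_MISS} (1 − qf(d)))`,
then the model has positive profit compared to quality assurance for all artifacts. -/
theorem positive_profit_vs_full_qa [DecidableEq β]
    (S : Finset α) (D : Finset β) (aff : β → Finset α)
    (hsub : ∀ d ∈ D, aff d ⊆ S) (hne : ∀ d ∈ D, (aff d).Nonempty)
    (h : α → Bool) (qa : α → ℝ) (hqa : ∀ s ∈ S, 0 ≤ qa s)
    (qf : β → ℝ) (hqf : ∀ d ∈ D, 0 ≤ qf d ∧ qf d < 1)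
    (C CINIT CEXEC : ℝ) (hCI : 0 ≤ CINIT) (hCE : 0 ≤ CEXEC)
    (hmiss : (DMISS D aff h).Nonempty)
    (hC : C < (∑ s ∈ S.filter (fun s => h s = false), qa s - CINIT - CEXEC)
        / (∑ d ∈ DMISS D aff h, (1 - qf d))) :
    0 < costRandom S D aff qa qf C 1 - cost S D aff h qa qf C CINIT CEXEC := by
  set T := ∑ d ∈ DMISS D aff h, (1 - qf d) with hT
  have hTpos : 0 < T := by
    apply Finset.sum_pos
    · intro d hd
      have hdD : d ∈ D := Finset.mem_sdiff.mp hd |>.1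
      linarith [(hqf d hdD).2]
    · exact hmiss
  have hCT : C * T < ∑ s ∈ S.filter (fun s => h s = false), qa s - CINIT - CEXEC := by
    rw [← lt_div_iff₀ hTpos]; exact hC
  have hsplitS : ∑ s ∈ S.filter (fun s => h s = true), qa s
      + ∑ s ∈ S.filter (fun s => h s = false), qa s = ∑ s ∈ S, qa s := by
    have := Finset.sum_filter_add_sum_filter_not S (fun s => h s = true) qa
    simpa using this
  have hsplitD : ∑ d ∈ DMISS D aff h, (qf d * C) + ∑ d ∈ DPRED D aff h, (qf d * C)
      = ∑ d ∈ D, (qf d * C) := by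
    exact Finset.sum_sdiff (Finset.filter_subset _ _)
  have hTC : ∑ d ∈ DMISS D aff h, (qf d * C) = (∑ d ∈ DMISS D aff h, qf d) * C := by
    rw [Finset.sum_mul]
  have hcard : (DMISS D aff h).card • C = (∑ d ∈ DMISS D aff h, (1:ℝ)) * C := by
    simp [nsmul_eq_mul]
  have hTdef : T = (DMISS D aff h).card - ∑ d ∈ DMISS D aff h, qf d := by
    rw [hT, Finset.sum_sub_distrib]; simp
  have key : costRandom S D aff qa qf C 1 - cost S D aff h qa qf C CINIT CEXEC
      = (∑ s ∈ S.filter (fun s => h s = false), qa s - CINIT - CEXEC) - C * T := by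
    simp only [costRandom, cost, one_pow, one_mul, sub_self, zero_mul,
      Finset.sum_const_zero, Finset.sum_const, hTdef]
    rw [← hsplitS, ← hsplitD, hTC, nsmul_eq_mul]
    ring
  linarith [key, hCT]
end

section
/- Suppose D_MISS is nonempty. Then cost_random(1) − cost(h) > 0 if and only if C < (Σ_{s : h(s)=0} qa(s) − C_INIT − C_EXEC) / (Σ_{d ∈ D_MISS} (1 − qf(d))). (Equivalence version of Corollary 2, following from the chain of equivalences in the proofs.) -/
open Finset

variable {α β : Type*}

/-- Equivalence version of Corollary 2. -/
theorem positive_profit_vs_full_qa_iff [DecidableEq β]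
    (S : Finset α) (D : Finset β) (aff : β → Finset α)
    (hsub : ∀ d ∈ D, aff d ⊆ S) (hne : ∀ d ∈ D, (aff d).Nonempty)
    (h : α → Bool) (qa : α → ℝ) (hqa : ∀ s ∈ S, 0 ≤ qa s)
    (qf : β → ℝ) (hqf : ∀ d ∈ D, 0 ≤ qf d ∧ qf d < 1)
    (C CINIT CEXEC : ℝ) (hCI : 0 ≤ CINIT) (hCE : 0 ≤ CEXEC)
    (hmiss : (DMISS D aff h).Nonempty) :
    0 < costRandom S D aff qa qf C 1 - cost S D aff h qa qf C CINIT CEXEC ↔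
      C < (∑ s ∈ S.filter (fun s => h s = false), qa s - CINIT - CEXEC)
        / (∑ d ∈ DMISS D aff h, (1 - qf d)) := by

  have hT : 0 < ∑ d ∈ DMISS D aff h, (1 - qf d) := by
    apply Finset.sum_pos _ hmiss
    intro d hd
    have hdD : d ∈ D := (Finset.mem_sdiff.mp hd).1
    linarith [(hqf d hdD).2]
  have hsplitS : ∑ s ∈ S.filter (fun s => h s = true), qa s
      + ∑ s ∈ S.filter (fun s => h s = false), qa s = ∑ s ∈ S, qa s := by
    rw [← Finset.sum_filter_add_sum_filter_not S (fun s => h s = true)]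
    congr 1
    apply Finset.sum_congr _ (fun _ _ => rfl)
    ext s; simp
  have hsplitD : ∑ d ∈ DMISS D aff h, qf d * C + ∑ d ∈ DPRED D aff h, qf d * C
      = ∑ d ∈ D, qf d * C := by
    exact Finset.sum_sdiff (Finset.filter_subset _ _)
  have h1 : C * ∑ d ∈ DMISS D aff h, (1 - qf d)
      = ∑ _d ∈ DMISS D aff h, C - ∑ d ∈ DMISS D aff h, qf d * C := by
    rw [Finset.mul_sum, ← Finset.sum_sub_distrib]
    exact Finset.sum_congr rfl (fun d _ => by ring)
  have hkey : costRandom S D aff qa qf C 1 - cost S D aff h qa qf C CINIT CEXEC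
      = (∑ s ∈ S.filter (fun s => h s = false), qa s - CINIT - CEXEC)
        - C * ∑ d ∈ DMISS D aff h, (1 - qf d) := by
    rw [h1, costRandom, cost]
    simp only [one_pow, sub_self, zero_mul, Finset.sum_const_zero, one_mul]
    linarith [hsplitS, hsplitD]
  rw [hkey, sub_pos, lt_div_iff₀ hT]
end

section
/- Size-aware n-to-m case of Corollary 3: suppose D_PRED and D_MISS are both nonempty and the size-aware initialization with qf(d) = 1 − (1 − p_qf)^{|d|} is used. If (Σ_{s : h(s)=1} size(s)) / (Σ_{d ∈ D_PRED} (1 − p_qf)^{|d|}) < C < (Σ_{s : h(s)=0} size(s)) / (Σ_{d ∈ D_MISS} (1 − p_qf)^{|d|}), then the defect prediction model h has a positive profit both in comparison to applying no quality assurance and in comparison to applying quality assurance to all artifacts, i.e., cost(h) < cost_random(0) and cost(h) < cost_random(1). -/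
open Finset

variable {α β : Type*}

/-- Size-aware `n`-to-`m` case of Corollary 3. -/
theorem corollary3_size_n_to_m [DecidableEq β]
    (S : Finset α) (D : Finset β) (aff : β → Finset α)
    (hsub : ∀ d ∈ D, aff d ⊆ S) (hne : ∀ d ∈ D, (aff d).Nonempty)
    (h : α → Bool)
    (size : α → ℝ) (hsize : ∀ s ∈ S, 0 < size s)
    (pqf : ℝ) (hq0 : 0 ≤ pqf) (hq1 : pqf < 1) (C : ℝ)
    (hpred : (DPRED D aff h).Nonempty) (hmiss : (DMISS D aff h).Nonempty)
    (hlow : (∑ s ∈ S.filter (fun s => h s = true), size s)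
        / (∑ d ∈ DPRED D aff h, (1 - pqf) ^ (aff d).card) < C)
    (hup : C < (∑ s ∈ S.filter (fun s => h s = false), size s)
        / (∑ d ∈ DMISS D aff h, (1 - pqf) ^ (aff d).card)) :
    cost S D aff h size (fun d => 1 - (1 - pqf) ^ (aff d).card) C 0 0
      < costRandom S D aff size (fun d => 1 - (1 - pqf) ^ (aff d).card) C 0 ∧
    cost S D aff h size (fun d => 1 - (1 - pqf) ^ (aff d).card) C 0 0
      < costRandom S D aff size (fun d => 1 - (1 - pqf) ^ (aff d).card) C 1 := by
  have hpos : (0:ℝ) < 1 - pqf := by linarith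
  have hPpos : 0 < ∑ d ∈ DPRED D aff h, (1 - pqf) ^ (aff d).card :=
    Finset.sum_pos (fun d _ => pow_pos hpos _) hpred
  have hMpos : 0 < ∑ d ∈ DMISS D aff h, (1 - pqf) ^ (aff d).card :=
    Finset.sum_pos (fun d _ => pow_pos hpos _) hmiss
  have hA : ∑ s ∈ S.filter (fun s => h s = true), size s
      < (∑ d ∈ DPRED D aff h, (1 - pqf) ^ (aff d).card) * C := by
    have := (div_lt_iff₀ hPpos).mp hlow; linarith
  have hB : (∑ d ∈ DMISS D aff h, (1 - pqf) ^ (aff d).card) * C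
      < ∑ s ∈ S.filter (fun s => h s = false), size s := by
    have := (lt_div_iff₀ hMpos).mp hup; linarith
  have hsplit : ∀ f : β → ℝ, ∑ d ∈ D, f d
      = ∑ d ∈ DMISS D aff h, f d + ∑ d ∈ DPRED D aff h, f d := by
    intro f
    rw [DMISS, DPRED, Finset.sum_sdiff (Finset.filter_subset _ _)]
  have h0 : ∀ d ∈ D, (0:ℝ) ^ (aff d).card = 0 := fun d hd =>
    zero_pow (Finset.card_ne_zero.mpr (hne d hd))
  have e4 : ∑ d ∈ DPRED D aff h, (1 - (1 - pqf) ^ (aff d).card) * C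
      = (∑ _d ∈ DPRED D aff h, C)
        - (∑ d ∈ DPRED D aff h, (1 - pqf) ^ (aff d).card) * C := by
    rw [Finset.sum_mul, ← Finset.sum_sub_distrib]
    exact Finset.sum_congr rfl fun d _ => by ring
  have e5 : ∑ d ∈ DMISS D aff h, (1 - (1 - pqf) ^ (aff d).card) * C
      = (∑ _d ∈ DMISS D aff h, C)
        - (∑ d ∈ DMISS D aff h, (1 - pqf) ^ (aff d).card) * C := by
    rw [Finset.sum_mul, ← Finset.sum_sub_distrib]
    exact Finset.sum_congr rfl fun d _ => by ring
  constructor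
  · have e1 : ∑ s ∈ S, (0:ℝ) * size s = 0 := by simp
    have e2 : ∑ d ∈ D, (1 - (0:ℝ) ^ (aff d).card) * C = ∑ _d ∈ D, C :=
      Finset.sum_congr rfl fun d hd => by rw [h0 d hd]; ring
    have e3 : ∑ d ∈ D, (0:ℝ) ^ (aff d).card
        * (1 - (1 - pqf) ^ (aff d).card) * C = 0 :=
      Finset.sum_eq_zero fun d hd => by rw [h0 d hd]; ring
    rw [cost, costRandom, e1, e2, e3, e4, hsplit (fun _ => C)]
    linarith
  · have e1 : ∑ s ∈ S, (1:ℝ) * size s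
        = ∑ s ∈ S.filter (fun s => h s = true), size s
          + ∑ s ∈ S.filter (fun s => h s = false), size s := by
      simp only [one_mul]
      rw [← Finset.sum_filter_add_sum_filter_not S (fun s => h s = true)]
      congr 1
      exact Finset.sum_congr (by ext s; simp) fun _ _ => rfl
    have e2 : ∑ d ∈ D, (1 - (1:ℝ) ^ (aff d).card) * C = 0 :=
      Finset.sum_eq_zero fun d _ => by simp
    have e3 : ∑ d ∈ D, (1:ℝ) ^ (aff d).card
        * (1 - (1 - pqf) ^ (aff d).card) * C
        = ∑ d ∈ D, (1 - (1 - pqf) ^ (aff d).card) * C :=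
      Finset.sum_congr rfl fun d _ => by simp
    rw [cost, costRandom, e1, e2, e3,
      hsplit (fun d => (1 - (1 - pqf) ^ (aff d).card) * C), e5]
    linarith
end

section
/- Size-aware 1-to-m case of Corollary 3: suppose every defect d ∈ D affects exactly one artifact (|d| = 1), D_PRED and D_MISS are both nonempty, and the size-aware initialization with qf(d) = p_qf is used. If (Σ_{s : h(s)=1} size(s)) / (|D_PRED|·(1 − p_qf)) < C < (Σ_{s : h(s)=0} size(s)) / (|D_MISS|·(1 − p_qf)), then cost(h) < cost_random(0) and cost(h) < cost_random(1). -/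
open Finset

variable {α β : Type*}

/-- Size-aware `1`-to-`m` case of Corollary 3. -/
theorem corollary3_size_1_to_m [DecidableEq β]
    (S : Finset α) (D : Finset β) (aff : β → Finset α)
    (hsub : ∀ d ∈ D, aff d ⊆ S) (hne : ∀ d ∈ D, (aff d).Nonempty)
    (h : α → Bool)
    (hd1 : ∀ d ∈ D, (aff d).card = 1)
    (size : α → ℝ) (hsize : ∀ s ∈ S, 0 < size s)
    (pqf : ℝ) (hq0 : 0 ≤ pqf) (hq1 : pqf < 1) (C : ℝ)
    (hpred : (DPRED D aff h).Nonempty) (hmiss : (DMISS D aff h).Nonempty)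
    (hlow : (∑ s ∈ S.filter (fun s => h s = true), size s)
        / (((DPRED D aff h).card : ℝ) * (1 - pqf)) < C)
    (hup : C < (∑ s ∈ S.filter (fun s => h s = false), size s)
        / (((DMISS D aff h).card : ℝ) * (1 - pqf))) :
    cost S D aff h size (fun _ => pqf) C 0 0
      < costRandom S D aff size (fun _ => pqf) C 0 ∧
    cost S D aff h size (fun _ => pqf) C 0 0
      < costRandom S D aff size (fun _ => pqf) C 1 := by
  have hq : (0:ℝ) < 1 - pqf := by linarith
  have hP : 0 < ((DPRED D aff h).card : ℝ) := by exact_mod_cast hpred.card_pos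
  have hM : 0 < ((DMISS D aff h).card : ℝ) := by exact_mod_cast hmiss.card_pos
  have hlow' : (∑ s ∈ S.filter (fun s => h s = true), size s)
      < C * (((DPRED D aff h).card : ℝ) * (1 - pqf)) := by
    rwa [div_lt_iff₀ (by positivity)] at hlow
  have hup' : C * (((DMISS D aff h).card : ℝ) * (1 - pqf))
      < ∑ s ∈ S.filter (fun s => h s = false), size s := by
    rwa [lt_div_iff₀ (by positivity)] at hup
  have hDsub : DPRED D aff h ⊆ D := Finset.filter_subset _ _
  have hcard : ((DMISS D aff h).card : ℝ) + ((DPRED D aff h).card : ℝ) = (D.card : ℝ) := by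
    exact_mod_cast Finset.card_sdiff_add_card_eq_card hDsub
  have esplit : (∑ s ∈ S.filter (fun s => h s = true), size s)
      + (∑ s ∈ S.filter (fun s => h s = false), size s) = ∑ s ∈ S, size s := by
    rw [← Finset.sum_filter_add_sum_filter_not S (fun s => h s = true)]
    congr 1
    apply Finset.sum_congr _ (fun _ _ => rfl)
    apply Finset.filter_congr
    intro x _
    simp [Bool.not_eq_true]
  have e1 : (∑ _d ∈ DMISS D aff h, C) = ((DMISS D aff h).card : ℝ) * C := by
    simp [Finset.sum_const, nsmul_eq_mul]
  have e2 : (∑ d ∈ DPRED D aff h, (fun _ => pqf) d * C)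
      = ((DPRED D aff h).card : ℝ) * (pqf * C) := by
    simp [Finset.sum_const, nsmul_eq_mul]
  have e3 : (∑ d ∈ D, (1 - (0:ℝ) ^ (aff d).card) * C) = (D.card : ℝ) * C := by
    rw [Finset.sum_congr rfl (g := fun _ => C) (fun d hd => by rw [hd1 d hd]; norm_num)]
    simp [Finset.sum_const, nsmul_eq_mul]
  have e4 : (∑ d ∈ D, (0:ℝ) ^ (aff d).card * (fun _ => pqf) d * C) = 0 := by
    apply Finset.sum_eq_zero
    intro d hd
    rw [hd1 d hd, pow_one]; ring
  have e5 : (∑ d ∈ D, (1 - (1:ℝ) ^ (aff d).card) * C) = 0 := by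
    apply Finset.sum_eq_zero
    intro d hd
    simp
  have e6 : (∑ d ∈ D, (1:ℝ) ^ (aff d).card * (fun _ => pqf) d * C)
      = (D.card : ℝ) * (pqf * C) := by
    rw [Finset.sum_congr rfl (g := fun _ => pqf * C) (fun d hd => by norm_num)]
    simp [Finset.sum_const, nsmul_eq_mul, mul_assoc]
  have hDC : ((D.card : ℝ)) * C = ((DMISS D aff h).card : ℝ) * C + ((DPRED D aff h).card : ℝ) * C := by
    rw [← hcard]; ring
  have hDpc : ((D.card : ℝ)) * (pqf * C) = ((DMISS D aff h).card : ℝ) * (pqf * C) + ((DPRED D aff h).card : ℝ) * (pqf * C) := by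
    rw [← hcard]; ring
  have hlow2 : (∑ s ∈ S.filter (fun s => h s = true), size s)
      < ((DPRED D aff h).card : ℝ) * C - ((DPRED D aff h).card : ℝ) * (pqf * C) := by
    calc _ < C * (((DPRED D aff h).card : ℝ) * (1 - pqf)) := hlow'
    _ = _ := by ring
  have hup2 : ((DMISS D aff h).card : ℝ) * C - ((DMISS D aff h).card : ℝ) * (pqf * C)
      < ∑ s ∈ S.filter (fun s => h s = false), size s := by
    calc _ = C * (((DMISS D aff h).card : ℝ) * (1 - pqf)) := by ring
    _ < _ := hup'
  constructor
  · unfold cost costRandom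
    rw [e1, e2, e3, e4]
    simp only [zero_mul, Finset.sum_const_zero]
    linarith [hlow2, hDC, hDpc]
  · unfold cost costRandom
    rw [e1, e2, e5, e6]
    simp only [one_mul]
    linarith [hup2, hDpc, esplit]
end

section
/- Size-aware 1-to-1 case of Corollary 3: suppose every defect affects exactly one artifact, distinct defects affect distinct artifacts, tp > 0, fn > 0, and the size-aware initialization with qf(d) = p_qf is used. If (Σ_{s : h(s)=1} size(s)) / (tp·(1 − p_qf)) < C < (Σ_{s : h(s)=0} size(s)) / (fn·(1 − p_qf)), then cost(h) < cost_random(0) and cost(h) < cost_random(1). -/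
open Finset

variable {α β : Type*}

/-- Size-aware `1`-to-`1` case of Corollary 3. -/
theorem corollary3_size_1_to_1 [DecidableEq α] [DecidableEq β]
    (S : Finset α) (D : Finset β) (aff : β → Finset α)
    (hsub : ∀ d ∈ D, aff d ⊆ S) (hne : ∀ d ∈ D, (aff d).Nonempty)
    (h : α → Bool)
    (hd1 : ∀ d ∈ D, (aff d).card = 1)
    (hinj : ∀ d1 ∈ D, ∀ d2 ∈ D, aff d1 = aff d2 → d1 = d2)
    (size : α → ℝ) (hsize : ∀ s ∈ S, 0 < size s)
    (pqf : ℝ) (hq0 : 0 ≤ pqf) (hq1 : pqf < 1) (C : ℝ)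
    (tp fn : ℕ)
    (htp_def : tp = (((D.biUnion aff)).filter (fun s => h s = true)).card)
    (hfn_def : fn = (((D.biUnion aff)).filter (fun s => h s = false)).card)
    (htp : 0 < tp) (hfn : 0 < fn)
    (hlow : (∑ s ∈ S.filter (fun s => h s = true), size s) / ((tp : ℝ) * (1 - pqf)) < C)
    (hup : C < (∑ s ∈ S.filter (fun s => h s = false), size s) / ((fn : ℝ) * (1 - pqf))) :
    cost S D aff h size (fun _ => pqf) C 0 0
      < costRandom S D aff size (fun _ => pqf) C 0 ∧
    cost S D aff h size (fun _ => pqf) C 0 0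
      < costRandom S D aff size (fun _ => pqf) C 1 := by
  -- disjointness of aff on D
  have hdisj : ∀ d1 ∈ D, ∀ d2 ∈ D, d1 ≠ d2 → Disjoint (aff d1) (aff d2) := by
    intro d1 h1 d2 h2 hne12
    obtain ⟨a, ha⟩ := Finset.card_eq_one.mp (hd1 d1 h1)
    obtain ⟨b, hb⟩ := Finset.card_eq_one.mp (hd1 d2 h2)
    rw [ha, hb, Finset.disjoint_singleton]
    intro hab
    exact hne12 (hinj d1 h1 d2 h2 (by rw [ha, hb, hab]))
  have key : ∀ (P : α → Bool),
      ((D.biUnion aff).filter (fun s => P s = true)).card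
        = (D.filter (fun d => ∀ s ∈ aff d, P s = true)).card := by
    intro P
    rw [Finset.filter_biUnion, Finset.card_biUnion (by
      intro d1 h1 d2 h2 h12
      exact Finset.disjoint_filter_filter (hdisj d1 h1 d2 h2 h12))]
    rw [Finset.card_filter]
    apply Finset.sum_congr rfl
    intro d hd
    obtain ⟨a, ha⟩ := Finset.card_eq_one.mp (hd1 d hd)
    rw [ha]
    by_cases hPa : P a = true <;> simp [Finset.filter_singleton, hPa]
  have htp' : tp = (DPRED D aff h).card := by rw [htp_def]; exact key h
  have hfn' : fn = (DMISS D aff h).card := by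
    rw [hfn_def]
    have : ((D.biUnion aff).filter (fun s => h s = false)).card
        = (D.filter (fun d => ∀ s ∈ aff d, (!(h s)) = true)).card := by
      have := key (fun s => !(h s))
      simpa using this
    rw [this]
    have hfe : D.filter (fun d => ∀ s ∈ aff d, (!(h s)) = true)
        = D.filter (fun d => ¬ ∀ s ∈ aff d, h s = true) := by
      apply Finset.filter_congr
      intro d hd
      obtain ⟨a, ha⟩ := Finset.card_eq_one.mp (hd1 d hd)
      simp [ha]
    rw [hfe, Finset.filter_not]
    rfl
  have hcardD : (DPRED D aff h).card + (DMISS D aff h).card = D.card := by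
    have hs : DPRED D aff h ⊆ D := Finset.filter_subset _ _
    rw [DMISS, Finset.card_sdiff_of_subset hs]
    have := Finset.card_le_card hs
    omega
  have hDcard : (D.card : ℝ) = (tp : ℝ) + (fn : ℝ) := by
    rw [htp', hfn']
    push_cast [← hcardD]
    ring
  -- abbreviations
  set T := ∑ s ∈ S.filter (fun s => h s = true), size s with hT
  set F := ∑ s ∈ S.filter (fun s => h s = false), size s with hF
  have hTF : T + F = ∑ s ∈ S, size s := by
    rw [hT, hF]
    have := Finset.sum_filter_add_sum_filter_not S (fun s => h s = true) size
    rw [← this]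
    congr 1
    apply Finset.sum_congr _ (fun _ _ => rfl)
    apply Finset.filter_congr
    intro s _
    simp
  have hcost : cost S D aff h size (fun _ => pqf) C 0 0
      = T + (fn : ℝ) * C + (tp : ℝ) * (pqf * C) := by
    rw [cost, htp', hfn']
    simp [Finset.sum_const, nsmul_eq_mul]
    try ring
  have e1 : ∀ d ∈ D, (1 - (0:ℝ) ^ (aff d).card) * C = C := fun d hd => by
    rw [hd1 d hd]; norm_num
  have e2 : ∀ d ∈ D, (0:ℝ) ^ (aff d).card * pqf * C = 0 := fun d hd => by
    rw [hd1 d hd]; ring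
  have e3 : ∀ d ∈ D, (1 - (1:ℝ) ^ (aff d).card) * C = 0 := fun d hd => by
    rw [hd1 d hd]; ring
  have e4 : ∀ d ∈ D, (1:ℝ) ^ (aff d).card * pqf * C = pqf * C := fun d hd => by
    rw [hd1 d hd]; ring
  have hr0 : costRandom S D aff size (fun _ => pqf) C 0 = ((tp : ℝ) + (fn : ℝ)) * C := by
    rw [costRandom, Finset.sum_congr rfl e1, Finset.sum_congr rfl e2]
    simp [Finset.sum_const, nsmul_eq_mul, hDcard]
  have hr1 : costRandom S D aff size (fun _ => pqf) C 1
      = (T + F) + ((tp : ℝ) + (fn : ℝ)) * (pqf * C) := by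
    rw [costRandom, Finset.sum_congr rfl e3, Finset.sum_congr rfl e4]
    simp [Finset.sum_const, nsmul_eq_mul, hDcard, ← hTF]
    try ring
  -- arithmetic
  have h1p : (0:ℝ) < 1 - pqf := by linarith
  have htpR : (0:ℝ) < (tp : ℝ) := by exact_mod_cast htp
  have hfnR : (0:ℝ) < (fn : ℝ) := by exact_mod_cast hfn
  have hlow' : T < (tp : ℝ) * (1 - pqf) * C := by
    have := (div_lt_iff₀ (by positivity)).mp hlow
    linarith
  have hup' : (fn : ℝ) * (1 - pqf) * C < F := by
    have := (lt_div_iff₀ (by positivity)).mp hup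
    linarith
  constructor
  · rw [hcost, hr0]; nlinarith
  · rw [hcost, hr1]; nlinarith
end

section
/- Constant-cost n-to-m case of Corollary 3: suppose D_PRED and D_MISS are both nonempty and the constant-cost initialization with qf(d) = 1 − (1 − p_qf)^{|d|} is used. If (tp + fp) / (Σ_{d ∈ D_PRED} (1 − p_qf)^{|d|}) < C < (tn + fn) / (Σ_{d ∈ D_MISS} (1 − p_qf)^{|d|}), then cost(h) < cost_random(0) and cost(h) < cost_random(1), where tp + fp = |{s ∈ S : h(s) = 1}| and tn + fn = |{s ∈ S : h(s) = 0}|. -/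
open Finset

variable {α β : Type*}

/-- Constant-cost `n`-to-`m` case of Corollary 3. -/
theorem corollary3_const_n_to_m [DecidableEq β]
    (S : Finset α) (D : Finset β) (aff : β → Finset α)
    (hsub : ∀ d ∈ D, aff d ⊆ S) (hne : ∀ d ∈ D, (aff d).Nonempty)
    (h : α → Bool)
    (pqf : ℝ) (hq0 : 0 ≤ pqf) (hq1 : pqf < 1) (C : ℝ)
    (hpred : (DPRED D aff h).Nonempty) (hmiss : (DMISS D aff h).Nonempty)
    (hlow : (((S.filter (fun s => h s = true)).card : ℝ))
        / (∑ d ∈ DPRED D aff h, (1 - pqf) ^ (aff d).card) < C)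
    (hup : C < (((S.filter (fun s => h s = false)).card : ℝ))
        / (∑ d ∈ DMISS D aff h, (1 - pqf) ^ (aff d).card)) :
    cost S D aff h (fun _ => 1) (fun d => 1 - (1 - pqf) ^ (aff d).card) C 0 0
      < costRandom S D aff (fun _ => 1) (fun d => 1 - (1 - pqf) ^ (aff d).card) C 0 ∧
    cost S D aff h (fun _ => 1) (fun d => 1 - (1 - pqf) ^ (aff d).card) C 0 0
      < costRandom S D aff (fun _ => 1) (fun d => 1 - (1 - pqf) ^ (aff d).card) C 1 := by
  classical
  have hz : ∀ d ∈ D, ((0:ℝ)) ^ (aff d).card = 0 := fun d hd =>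
    zero_pow (Finset.card_pos.mpr (hne d hd)).ne'
  have hpow : ∀ d ∈ D, (0:ℝ) < (1 - pqf) ^ (aff d).card := fun d _ =>
    pow_pos (by linarith) _
  have hA : 0 < ∑ d ∈ DPRED D aff h, (1 - pqf) ^ (aff d).card :=
    Finset.sum_pos (fun d hd => hpow d (Finset.mem_of_mem_filter d hd)) hpred
  have hB : 0 < ∑ d ∈ DMISS D aff h, (1 - pqf) ^ (aff d).card :=
    Finset.sum_pos (fun d hd => hpow d (Finset.mem_sdiff.mp hd).1) hmiss
  have hlow' : ((S.filter (fun s => h s = true)).card : ℝ)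
      < C * ∑ d ∈ DPRED D aff h, (1 - pqf) ^ (aff d).card := by
    rw [div_lt_iff₀ hA] at hlow; linarith
  have hup' : C * ∑ d ∈ DMISS D aff h, (1 - pqf) ^ (aff d).card
      < ((S.filter (fun s => h s = false)).card : ℝ) := by
    rw [lt_div_iff₀ hB] at hup; linarith
  have hsplitD : ∀ f : β → ℝ,
      (∑ d ∈ DMISS D aff h, f d) + ∑ d ∈ DPRED D aff h, f d = ∑ d ∈ D, f d :=
    fun f => Finset.sum_sdiff (Finset.filter_subset _ _)
  have hcardS : ((S.filter (fun s => h s = true)).card : ℝ)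
      + ((S.filter (fun s => h s = false)).card : ℝ) = (S.card : ℝ) := by
    have := Finset.card_filter_add_card_filter_not
      (s := S) (p := fun s => h s = true)
    have h2 : S.filter (fun s => ¬ (h s = true)) = S.filter (fun s => h s = false) := by
      apply Finset.filter_congr; intro s _; simp
    rw [h2] at this
    exact_mod_cast this
  have ec : cost S D aff h (fun _ => 1) (fun d => 1 - (1 - pqf) ^ (aff d).card) C 0 0
      = ((S.filter (fun s => h s = true)).card : ℝ)
        + ((DMISS D aff h).card : ℝ) * C
        + ∑ d ∈ DPRED D aff h, (1 - (1 - pqf) ^ (aff d).card) * C := by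
    unfold cost
    simp [Finset.sum_const, nsmul_eq_mul]
  have e0 : costRandom S D aff (fun _ => 1) (fun d => 1 - (1 - pqf) ^ (aff d).card) C 0
      = ∑ d ∈ D, C := by
    unfold costRandom
    have h1 : ∑ d ∈ D, (1 - (0:ℝ) ^ (aff d).card) * C = ∑ d ∈ D, C :=
      Finset.sum_congr rfl (fun d hd => by rw [hz d hd]; ring)
    have h2 : ∑ d ∈ D, ((0:ℝ)) ^ (aff d).card * (1 - (1 - pqf) ^ (aff d).card) * C = 0 :=
      Finset.sum_eq_zero (fun d hd => by rw [hz d hd]; ring)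
    rw [h1, h2]; simp
  have e1 : costRandom S D aff (fun _ => 1) (fun d => 1 - (1 - pqf) ^ (aff d).card) C 1
      = (S.card : ℝ) + ∑ d ∈ D, (1 - (1 - pqf) ^ (aff d).card) * C := by
    unfold costRandom
    simp [Finset.sum_const, nsmul_eq_mul]
  have key1 : (∑ d ∈ DPRED D aff h, C)
      - ∑ d ∈ DPRED D aff h, (1 - (1 - pqf) ^ (aff d).card) * C
      = C * ∑ d ∈ DPRED D aff h, (1 - pqf) ^ (aff d).card := by
    rw [← Finset.sum_sub_distrib, Finset.mul_sum]
    exact Finset.sum_congr rfl (fun d _ => by ring)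
  have key2 : ((DMISS D aff h).card : ℝ) * C
      - ∑ d ∈ DMISS D aff h, (1 - (1 - pqf) ^ (aff d).card) * C
      = C * ∑ d ∈ DMISS D aff h, (1 - pqf) ^ (aff d).card := by
    have hc : ((DMISS D aff h).card : ℝ) * C = ∑ _d ∈ DMISS D aff h, C := by
      simp [Finset.sum_const, nsmul_eq_mul]
    rw [hc, ← Finset.sum_sub_distrib, Finset.mul_sum]
    exact Finset.sum_congr rfl (fun d _ => by ring)
  constructor
  · rw [ec, e0, ← hsplitD (fun _ => C)]
    have : (∑ _d ∈ DMISS D aff h, C) = ((DMISS D aff h).card : ℝ) * C := by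
      simp [Finset.sum_const, nsmul_eq_mul]
    linarith
  · rw [ec, e1, ← hsplitD (fun d => (1 - (1 - pqf) ^ (aff d).card) * C), ← hcardS]
    linarith
end

section
/- Constant-cost 1-to-m case of Corollary 3: suppose every defect d ∈ D affects exactly one artifact (|d| = 1), D_PRED and D_MISS are both nonempty, and the constant-cost initialization with qf(d) = p_qf is used. If (tp + fp) / (|D_PRED|·(1 − p_qf)) < C < (tn + fn) / (|D_MISS|·(1 − p_qf)), then cost(h) < cost_random(0) and cost(h) < cost_random(1), where tp + fp = |{s ∈ S : h(s) = 1}| and tn + fn = |{s ∈ S : h(s) = 0}|. -/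
open Finset

variable {α β : Type*}

/-- Constant-cost `1`-to-`m` case of Corollary 3. -/
theorem corollary3_const_1_to_m [DecidableEq β]
    (S : Finset α) (D : Finset β) (aff : β → Finset α)
    (hsub : ∀ d ∈ D, aff d ⊆ S) (hne : ∀ d ∈ D, (aff d).Nonempty)
    (h : α → Bool)
    (hd1 : ∀ d ∈ D, (aff d).card = 1)
    (pqf : ℝ) (hq0 : 0 ≤ pqf) (hq1 : pqf < 1) (C : ℝ)
    (hpred : (DPRED D aff h).Nonempty) (hmiss : (DMISS D aff h).Nonempty)
    (hlow : (((S.filter (fun s => h s = true)).card : ℝ))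
        / (((DPRED D aff h).card : ℝ) * (1 - pqf)) < C)
    (hup : C < (((S.filter (fun s => h s = false)).card : ℝ))
        / (((DMISS D aff h).card : ℝ) * (1 - pqf))) :
    cost S D aff h (fun _ => 1) (fun _ => pqf) C 0 0
      < costRandom S D aff (fun _ => 1) (fun _ => pqf) C 0 ∧
    cost S D aff h (fun _ => 1) (fun _ => pqf) C 0 0
      < costRandom S D aff (fun _ => 1) (fun _ => pqf) C 1 := by

  have hq : (0:ℝ) < 1 - pqf := by linarith
  have hpc : (0:ℝ) < (DPRED D aff h).card := by
    exact_mod_cast Finset.card_pos.mpr hpred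
  have hmc : (0:ℝ) < (DMISS D aff h).card := by
    exact_mod_cast Finset.card_pos.mpr hmiss
  have hlow' : ((S.filter (fun s => h s = true)).card : ℝ)
      < (DPRED D aff h).card * (1 - pqf) * C := by
    rw [div_lt_iff₀ (by positivity)] at hlow
    linarith
  have hup' : (DMISS D aff h).card * (1 - pqf) * C
      < ((S.filter (fun s => h s = false)).card : ℝ) := by
    rw [lt_div_iff₀ (by positivity)] at hup
    linarith
  have hsplit : DPRED D aff h ⊆ D := Finset.filter_subset _ _
  have hcard : ((DPRED D aff h).card : ℝ) + (DMISS D aff h).card = D.card := by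
    have := Finset.card_sdiff_add_card_eq_card hsplit
    unfold DMISS
    push_cast [← this]
    ring
  have hScard : ((S.filter (fun s => h s = true)).card : ℝ)
      + ((S.filter (fun s => h s = false)).card : ℝ) = S.card := by
    have := Finset.card_filter_add_card_filter_not (s := S)
      (p := fun s => h s = true)
    have h2 : ∀ s : α, (¬ h s = true) ↔ h s = false := by simp
    simp only [h2] at this
    exact_mod_cast this
  have hcost : cost S D aff h (fun _ => 1) (fun _ => pqf) C 0 0
      = ((S.filter (fun s => h s = true)).card : ℝ)
        + (DMISS D aff h).card * C + (DPRED D aff h).card * (pqf * C) := by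
    unfold cost
    simp [Finset.sum_const, mul_comm, mul_assoc]
  have hmisssub : DMISS D aff h ⊆ D := Finset.sdiff_subset
  have hr0 : costRandom S D aff (fun _ => 1) (fun _ => pqf) C 0
      = (D.card : ℝ) * C := by
    unfold costRandom
    have e1 : ∀ d ∈ D, (1 - (0:ℝ) ^ (aff d).card) * C = C := fun d hd => by
      rw [hd1 d hd]; ring
    have e2 : ∀ d ∈ D, (0:ℝ) ^ (aff d).card * pqf * C = 0 := fun d hd => by
      rw [hd1 d hd]; ring
    rw [Finset.sum_congr rfl e1, Finset.sum_congr rfl e2]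
    simp [mul_comm]
  have hr1 : costRandom S D aff (fun _ => 1) (fun _ => pqf) C 1
      = (S.card : ℝ) + (D.card : ℝ) * (pqf * C) := by
    unfold costRandom
    simp [mul_comm, mul_assoc]
  constructor
  · rw [hcost, hr0, ← hcard]
    nlinarith
  · rw [hcost, hr1, ← hcard, ← hScard]
    nlinarith
end

section
/- Constant-cost 1-to-1 case of Corollary 3: suppose every defect affects exactly one artifact, distinct defects affect distinct artifacts, tp > 0, fn > 0, and the constant-cost initialization with qf(d) = p_qf is used. If (tp + fp) / (tp·(1 − p_qf)) < C < (tn + fn) / (fn·(1 − p_qf)), then cost(h) < cost_random(0) and cost(h) < cost_random(1). -/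
open Finset

variable {α β : Type*}

/-- Constant-cost `1`-to-`1` case of Corollary 3. -/
theorem corollary3_const_1_to_1 [DecidableEq α] [DecidableEq β]
    (S : Finset α) (D : Finset β) (aff : β → Finset α)
    (hsub : ∀ d ∈ D, aff d ⊆ S) (hne : ∀ d ∈ D, (aff d).Nonempty)
    (h : α → Bool)
    (hd1 : ∀ d ∈ D, (aff d).card = 1)
    (hinj : ∀ d1 ∈ D, ∀ d2 ∈ D, aff d1 = aff d2 → d1 = d2)
    (pqf : ℝ) (hq0 : 0 ≤ pqf) (hq1 : pqf < 1) (C : ℝ)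
    (tp fp tn fn : ℕ)
    (htp_def : tp = ((D.biUnion aff).filter (fun s => h s = true)).card)
    (hfp_def : fp = ((S \ D.biUnion aff).filter (fun s => h s = true)).card)
    (htn_def : tn = ((S \ D.biUnion aff).filter (fun s => h s = false)).card)
    (hfn_def : fn = ((D.biUnion aff).filter (fun s => h s = false)).card)
    (htp : 0 < tp) (hfn : 0 < fn)
    (hlow : ((tp : ℝ) + (fp : ℝ)) / ((tp : ℝ) * (1 - pqf)) < C)
    (hup : C < ((tn : ℝ) + (fn : ℝ)) / ((fn : ℝ) * (1 - pqf))) :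
    cost S D aff h (fun _ => 1) (fun _ => pqf) C 0 0
      < costRandom S D aff (fun _ => 1) (fun _ => pqf) C 0 ∧
    cost S D aff h (fun _ => 1) (fun _ => pqf) C 0 0
      < costRandom S D aff (fun _ => 1) (fun _ => pqf) C 1 := by
  have h1 : (0:ℝ) < 1 - pqf := by linarith
  -- disjointness of the affected sets
  have hdisj : ∀ d1 ∈ D, ∀ d2 ∈ D, d1 ≠ d2 → Disjoint (aff d1) (aff d2) := by
    intro d1 hd1' d2 hd2' hne12
    obtain ⟨s1, hs1⟩ := Finset.card_eq_one.mp (hd1 d1 hd1')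
    obtain ⟨s2, hs2⟩ := Finset.card_eq_one.mp (hd1 d2 hd2')
    have hne' : s1 ≠ s2 := by
      intro h'
      exact hne12 (hinj d1 hd1' d2 hd2' (by rw [hs1, hs2, h']))
    rw [hs1, hs2]
    simp [Finset.disjoint_left, hne']
  have key : ∀ (p : Bool), ((D.biUnion aff).filter (fun s => h s = p)).card
      = ∑ d ∈ D, ((aff d).filter (fun s => h s = p)).card := by
    intro p
    rw [Finset.filter_biUnion, Finset.card_biUnion]
    intro d1 hd1' d2 hd2' hne12
    exact Finset.disjoint_filter_filter (hdisj d1 hd1' d2 hd2' hne12)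
  have hcard_true : ∀ d ∈ D, ((aff d).filter (fun s => h s = true)).card
      = if (∀ s ∈ aff d, h s = true) then 1 else 0 := by
    intro d hd
    obtain ⟨s, hs⟩ := Finset.card_eq_one.mp (hd1 d hd)
    rw [hs]
    by_cases hh : h s = true <;> simp [Finset.filter_singleton, hh]
  have hcard_false : ∀ d ∈ D, ((aff d).filter (fun s => h s = false)).card
      = if (∀ s ∈ aff d, h s = true) then 0 else 1 := by
    intro d hd
    obtain ⟨s, hs⟩ := Finset.card_eq_one.mp (hd1 d hd)
    rw [hs]
    by_cases hh : h s = true <;> simp [Finset.filter_singleton, hh]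
  have hDPRED : (DPRED D aff h).card = tp := by
    rw [htp_def, key, DPRED, Finset.card_filter]
    exact (Finset.sum_congr rfl hcard_true).symm
  have hDMISS : (DMISS D aff h).card = fn := by
    have : DMISS D aff h = D.filter (fun d => ¬ ∀ s ∈ aff d, h s = true) := by
      rw [DMISS, DPRED, Finset.filter_not]
    rw [this, hfn_def, key, Finset.card_filter]
    refine (Finset.sum_congr rfl ?_).symm
    intro d hd
    rw [hcard_false d hd]
    by_cases hh : ∀ s ∈ aff d, h s = true
    · rw [if_pos hh, if_neg (not_not_intro hh)]
    · rw [if_neg hh, if_pos hh]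
  have hbsub : D.biUnion aff ⊆ S := Finset.biUnion_subset.mpr hsub
  have hsdisj : Disjoint (D.biUnion aff) (S \ D.biUnion aff) := Finset.disjoint_sdiff
  have hS_eq : D.biUnion aff ∪ (S \ D.biUnion aff) = S := by
    rw [Finset.union_sdiff_of_subset hbsub]
  have hSfilter : (S.filter (fun s => h s = true)).card = tp + fp := by
    rw [htp_def, hfp_def, ← Finset.card_union_of_disjoint
      (Finset.disjoint_filter_filter hsdisj), ← Finset.filter_union, hS_eq]
  have hScard : S.card = tp + fp + tn + fn := by
    have e1 : (D.biUnion aff).card = tp + fn := by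
      rw [htp_def, hfn_def]
      have := Finset.card_filter_add_card_filter_not
        (s := D.biUnion aff) (p := fun s => h s = true)
      simp only [Bool.not_eq_true] at this
      omega
    have e2 : (S \ D.biUnion aff).card = fp + tn := by
      rw [hfp_def, htn_def]
      have := Finset.card_filter_add_card_filter_not
        (s := S \ D.biUnion aff) (p := fun s => h s = true)
      simp only [Bool.not_eq_true] at this
      omega
    have := Finset.card_union_of_disjoint hsdisj
    rw [hS_eq, e1, e2] at this
    omega
  have hDcard : D.card = tp + fn := by
    have hsub' : DPRED D aff h ⊆ D := Finset.filter_subset _ _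
    have := Finset.card_sdiff_add_card_eq_card hsub'
    rw [show D \ DPRED D aff h = DMISS D aff h from rfl, hDMISS, hDPRED] at this
    omega
  -- evaluate the costs
  have hcost : cost S D aff h (fun _ => 1) (fun _ => pqf) C 0 0
      = ((tp : ℝ) + fp) + (fn : ℝ) * C + (tp : ℝ) * (pqf * C) := by
    simp only [cost, Finset.sum_const, nsmul_eq_mul, hDMISS, hDPRED, hSfilter]
    push_cast
    ring
  have hr0 : costRandom S D aff (fun _ => 1) (fun _ => pqf) C 0
      = ((tp : ℝ) + fn) * C := by
    simp only [costRandom]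
    rw [Finset.sum_congr rfl (fun d hd => by rw [hd1 d hd] : ∀ d ∈ D,
        (1 - (0:ℝ) ^ (aff d).card) * C = (1 - (0:ℝ) ^ 1) * C),
      Finset.sum_congr rfl (fun d hd => by rw [hd1 d hd] : ∀ d ∈ D,
        (0:ℝ) ^ (aff d).card * pqf * C = (0:ℝ) ^ 1 * pqf * C)]
    simp [hDcard]
  have hr1 : costRandom S D aff (fun _ => 1) (fun _ => pqf) C 1
      = ((tp : ℝ) + fp + tn + fn) + ((tp : ℝ) + fn) * (pqf * C) := by
    simp only [costRandom]
    simp [hDcard, hScard]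
  have htpR : (0:ℝ) < tp := by exact_mod_cast htp
  have hfnR : (0:ℝ) < fn := by exact_mod_cast hfn
  have hlow' : (tp : ℝ) + fp < C * ((tp : ℝ) * (1 - pqf)) :=
    (div_lt_iff₀ (by positivity)).mp hlow
  have hup' : C * ((fn : ℝ) * (1 - pqf)) < (tn : ℝ) + fn :=
    (lt_div_iff₀ (by positivity)).mp hup
  constructor
  · rw [hcost, hr0]; nlinarith
  · rw [hcost, hr1]; nlinarith
end

section
/- Let S be a finite set of artifacts, D a finite set of defects (each a nonempty subset of S), qa : S → ℝ, qf : D → [0,1), C ∈ ℝ, and p ∈ [0,1]. If H : S → {0,1} is drawn from the product of |S| independent Bernoulli(p) distributions, then the expected total cost E[ Σ_{s : H(s)=1} qa(s) + Σ_{d ∈ D_MISS(H)} C + Σ_{d ∈ D_PRED(H)} qf(d)·C ] equals Σ_{s ∈ S} p·qa(s) + Σ_{d ∈ D} (1 − p^{|d|})·C + Σ_{d ∈ D} p^{|d|}·qf(d)·C, where D_PRED(H) = {d ∈ D : ∀ s ∈ d, H(s) = 1} and D_MISS(H) = D \ D_PRED(H). (Equation (16): the expected cost of randomly applying quality assurance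 with probability p equals cost_random(p).) -/
open MeasureTheory Finset

/-!
Expand the cost into indicator terms: `qa s` is paid iff `s` is selected, and a defect `d`
costs `qf d * C` if all of its `|d|` artifacts are selected and `C` otherwise. By
linearity of expectation it remains to know the probability that a given set `T` of
artifacts is entirely selected, which under the product measure is `p ^ |T|`.
-/

theorem MeasureTheory.integral_ite_eq_measureReal {Ω : Type*} [MeasurableSpace Ω]
    (μ : Measure Ω) [IsProbabilityMeasure μ] {P : Ω → Prop} [DecidablePred P]
    (hP : MeasurableSet {ω | P ω}) (a b : ℝ) :
    ∫ ω, (if P ω then a else b) ∂μ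
      = μ.real {ω | P ω} * a + (1 - μ.real {ω | P ω}) * b := by
  change ∫ ω, Set.piecewise {ω | P ω} (fun _ => a) (fun _ => b) ω ∂μ = _
  rw [integral_piecewise hP integrableOn_const integrableOn_const, setIntegral_const,
    setIntegral_const, probReal_compl_eq_one_sub hP, smul_eq_mul, smul_eq_mul]

theorem MeasureTheory.Measure.pi_setOf_forall_eq_true {ι : Type*} [Fintype ι]
    (μ : ι → Measure Bool) [∀ i, IsProbabilityMeasure (μ i)] (T : Finset ι) :
    Measure.pi μ {H | ∀ i ∈ T, H i = true} = ∏ i ∈ T, μ i {true} := by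
  have hcyl : {H : ι → Bool | ∀ i ∈ T, H i = true} = (T : Set ι).pi fun _ => {true} := by
    ext H; simp
  rw [hcyl, Measure.pi_pi_finset]

theorem PMF.bernoulli_toMeasure_true (q : NNReal) (hq : q ≤ 1) :
    (PMF.bernoulli q hq).toMeasure {true} = q := by
  rw [PMF.toMeasure_apply_singleton _ _ (measurableSet_singleton _), PMF.bernoulli_apply]
  rfl

theorem MeasureTheory.Measure.real_pi_bernoulli_setOf_forall_eq_true {ι : Type*} [Fintype ι]
    (q : NNReal) (hq : q ≤ 1) (T : Finset ι) :
    (Measure.pi fun _ : ι => (PMF.bernoulli q hq).toMeasure).real {H | ∀ i ∈ T, H i = true}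
      = (q : ℝ) ^ T.card := by
  rw [measureReal_def, Measure.pi_setOf_forall_eq_true, PMF.bernoulli_toMeasure_true,
    prod_const, ENNReal.toReal_pow, ENNReal.coe_toReal]

theorem expected_cost_random_general {α β : Type*} [Fintype α] [DecidableEq α] [DecidableEq β]
    (D : Finset β) (aff : β → Finset α)
    (qa : α → ℝ) (qf : β → ℝ)
    (C : ℝ) (p : ℝ) (hp0 : 0 ≤ p) (hp1 : p ≤ 1) :
    ∫ H : α → Bool,
        ((∑ s ∈ Finset.univ.filter (fun s => H s = true), qa s)
          + (∑ _d ∈ D \ D.filter (fun d => ∀ s ∈ aff d, H s = true), C)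
          + (∑ d ∈ D.filter (fun d => ∀ s ∈ aff d, H s = true), qf d * C))
      ∂(Measure.pi (fun _ : α =>
        (PMF.bernoulli (Real.toNNReal p) (Real.toNNReal_le_one.mpr hp1)).toMeasure))
    = ∑ s : α, p * qa s + ∑ d ∈ D, (1 - p ^ (aff d).card) * C
        + ∑ d ∈ D, p ^ (aff d).card * qf d * C := by
  set μ := Measure.pi fun _ : α =>
    (PMF.bernoulli (Real.toNNReal p) (Real.toNNReal_le_one.mpr hp1)).toMeasure
  have hcyl (T : Finset α) : μ.real {H | ∀ s ∈ T, H s = true} = p ^ T.card := by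
    rw [Measure.real_pi_bernoulli_setOf_forall_eq_true, Real.coe_toNNReal _ hp0]
  have hsel (s : α) : μ.real {H | H s = true} = p := by simpa using hcyl {s}
  have hcost (H : α → Bool) :
      (∑ s ∈ univ.filter (fun s => H s = true), qa s)
          + (∑ _d ∈ D \ D.filter (fun d => ∀ s ∈ aff d, H s = true), C)
          + (∑ d ∈ D.filter (fun d => ∀ s ∈ aff d, H s = true), qf d * C)
        = ∑ s, (if H s = true then qa s else 0)
          + ∑ d ∈ D, if ∀ s ∈ aff d, H s = true then qf d * C else C := by
    rw [sum_filter, ← filter_not, add_assoc, add_comm (∑ _d ∈ _, C), ← sum_ite]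
  simp_rw [hcost]
  rw [integral_add .of_finite .of_finite, integral_finsetSum _ fun _ _ => .of_finite,
    integral_finsetSum _ fun _ _ => .of_finite]
  simp only [integral_ite_eq_measureReal μ (Set.toFinite _).measurableSet, hsel, hcyl,
    mul_zero, add_zero]
  rw [add_assoc, ← sum_add_distrib]
  exact congrArg _ (sum_congr rfl fun d _ => by ring)

/-- Equation (16): the expected cost of randomly applying quality assurance to each
artifact independently with probability `p` equals `cost_random(p)`. Here the set of
artifacts is the finite type `α`, `D` is the set of defects, and `aff d` is the
(nonempty) set of artifacts affected by defect `d`. For a random selection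
`H : α → Bool`, a defect is predicted (covered) if all its artifacts are selected,
and missed otherwise. -/
theorem expected_cost_random {α β : Type*} [Fintype α] [DecidableEq α] [DecidableEq β]
    (D : Finset β) (aff : β → Finset α) (hne : ∀ d ∈ D, (aff d).Nonempty)
    (qa : α → ℝ) (qf : β → ℝ) (hqf : ∀ d ∈ D, 0 ≤ qf d ∧ qf d < 1)
    (C : ℝ) (p : ℝ) (hp0 : 0 ≤ p) (hp1 : p ≤ 1) :
    ∫ H : α → Bool,
        ((∑ s ∈ Finset.univ.filter (fun s => H s = true), qa s)
          + (∑ _d ∈ D \ D.filter (fun d => ∀ s ∈ aff d, H s = true), C)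
          + (∑ d ∈ D.filter (fun d => ∀ s ∈ aff d, H s = true), qf d * C))
      ∂(Measure.pi (fun _ : α =>
        (PMF.bernoulli (Real.toNNReal p) (Real.toNNReal_le_one.mpr hp1)).toMeasure))
    = ∑ s : α, p * qa s + ∑ d ∈ D, (1 - p ^ (aff d).card) * C
        + ∑ d ∈ D, p ^ (aff d).card * qf d * C :=
  expected_cost_random_general D aff qa qf C p hp0 hp1
end
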